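/- An FSA S is not strongly periodically D-detectable with respect to T_spec if and only if in its observer S_obs at least one of the following holds: (7) there are a reachable state q of S_obs and x∈q such that (q×q)∩T_spec≠∅ and there is a transition sequence x→^{s1}x'→^{s2}x' in S for some s1∈(T_uo)*, s2∈(T_uo)^+, x'∈X; (8) there is a reachable transition cycle of S_obs such that every state q of the cycle satisfies (q×q)∩T_spec≠∅. -/

import Mathlib

/-- A finite-state automaton (FSA) `S = (X, T, X0, δ, Σ, ℓ)`:
states `X`, events `T`, outputs `O` (the alphabet Σ), initial states `init`,
transition relation `delta`, and labeling function `label` where `none` encodes ε. -/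
structure FSA (X T O : Type) where
  init : Set X
  delta : X → T → X → Prop
  label : T → Option O

/-- Composed events of the (ε-extended) self-composition: pairs of observable
events with the same label, unobservable events on the left/right component,
and the added ε event. -/
inductive CEvent (T : Type) where
  | both : T → T → CEvent T
  | left : T → CEvent T
  | right : T → CEvent T
  | eps : CEvent T

namespace FSA

variable {X T O : Type}

/-- Extension of `delta` to finite event sequences: `x →^s x'`. -/
def Run (M : FSA X T O) : X → List T → X → Prop
  | x, [], x' => x = x'
  | x, t :: s, x' => ∃ y, M.delta x t y ∧ Run M y s x'

/-- The label sequence `ℓ(s)` of a finite event sequence. -/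
def labelSeq (M : FSA X T O) (s : List T) : List O :=
  s.filterMap M.label

/-- Membership in `L^ω(S)`: infinite event sequences generated from some initial state. -/
def InLomega (M : FSA X T O) (s : ℕ → T) : Prop :=
  ∃ x : ℕ → X, x 0 ∈ M.init ∧ ∀ i, M.delta (x i) (s i) (x (i + 1))

/-- `s'` is a finite prefix of the infinite sequence `s`. -/
def IsPrefixOf (s' : List T) (s : ℕ → T) : Prop :=
  ∀ i : Fin s'.length, s'.get i = s i

/-- The current-state estimate `M(S,σ)`. -/
def est (M : FSA X T O) (σ : List O) : Set X :=
  {x | ∃ x0 ∈ M.init, ∃ s : List T, M.labelSeq s = σ ∧ M.Run x0 s x}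

/-- Strong periodic detectability (SPD). -/
def SPD (M : FSA X T O) : Prop :=
  ∃ k : ℕ, 0 < k ∧ ∀ s : ℕ → T, M.InLomega s → ∀ s' : List T, IsPrefixOf s' s →
    ∃ s'' : List T, (M.labelSeq s'').length < k ∧ IsPrefixOf (s' ++ s'') s ∧
      (M.est (M.labelSeq (s' ++ s''))).ncard = 1

/-- Strong periodic D-detectability with respect to `Tspec`. -/
def SPDD (M : FSA X T O) (Tspec : Set (X × X)) : Prop :=
  ∃ k : ℕ, 0 < k ∧ ∀ s : ℕ → T, M.InLomega s → ∀ s' : List T, IsPrefixOf s' s →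
    ∃ s'' : List T, (M.labelSeq s'').length < k ∧ IsPrefixOf (s' ++ s'') s ∧
      (M.est (M.labelSeq (s' ++ s'')) ×ˢ M.est (M.labelSeq (s' ++ s''))) ∩ Tspec = ∅

/-- An unobservable transition sequence `x →^s x'` (all events labeled ε). -/
def UnobsRun (M : FSA X T O) (x : X) (s : List T) (x' : X) : Prop :=
  M.Run x s x' ∧ ∀ t ∈ s, M.label t = none

/-- Unobservable reach `UR` of a set of states. -/
def UR (M : FSA X T O) (q : Set X) : Set X :=
  {x' | ∃ x ∈ q, ∃ s : List T, M.UnobsRun x s x'}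

/-- Observable reach `Reach_σ` of a set of states. -/
def ReachO (M : FSA X T O) (σ : O) (q : Set X) : Set X :=
  {x' | ∃ x ∈ q, ∃ t : T, M.delta x t x' ∧ M.label t = some σ}

/-- Initial state `M(S,ε) = UR(X0)` of the observer/detector. -/
def obsInit (M : FSA X T O) : Set X := M.UR M.init

/-- Observer transition `δ_obs(q,σ) = UR(Reach_σ(q))` (defined when nonempty). -/
def obsTrans (M : FSA X T O) (q : Set X) (σ : O) (q' : Set X) : Prop :=
  q' = M.UR (M.ReachO σ q) ∧ q'.Nonempty

/-- Sequences of observer transitions. -/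
def ObsRun (M : FSA X T O) : Set X → List O → Set X → Prop
  | q, [], q' => q = q'
  | q, σ :: w, q' => ∃ q1, M.obsTrans q σ q1 ∧ ObsRun M q1 w q'

/-- Reachable states of the observer `S_obs`. -/
def ObsReachable (M : FSA X T O) (q : Set X) : Prop :=
  ∃ w : List O, M.ObsRun M.obsInit w q

/-- Detector transition relation `δ_det`. -/
def detTrans (M : FSA X T O) (q : Set X) (σ : O) (q' : Set X) : Prop :=
  (1 < (M.UR (M.ReachO σ q)).ncard ∧ q' ⊆ M.UR (M.ReachO σ q) ∧ q'.ncard = 2) ∨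
  ((M.UR (M.ReachO σ q)).ncard = 1 ∧ q' = M.UR (M.ReachO σ q))

/-- Sequences of detector transitions. -/
def DetRun (M : FSA X T O) : Set X → List O → Set X → Prop
  | q, [], q' => q = q'
  | q, σ :: w, q' => ∃ q1, M.detTrans q σ q1 ∧ DetRun M q1 w q'

/-- Reachable states of the detector `S_det`. -/
def DetReachable (M : FSA X T O) (q : Set X) : Prop :=
  ∃ w : List O, M.DetRun M.obsInit w q

/-- The label of a composed event. -/
def cLabel (M : FSA X T O) : CEvent T → Option O
  | CEvent.both t _ => M.label t
  | CEvent.left _ => none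
  | CEvent.right _ => none
  | CEvent.eps => none

/-- The label sequence of a sequence of composed events. -/
def ccLabelSeq (M : FSA X T O) (s : List (CEvent T)) : List O :=
  s.filterMap M.cLabel

/-- Transition relation `δ'` of the self-composition `CC_A(S)`. -/
def ccTrans (M : FSA X T O) : X × X → CEvent T → X × X → Prop
  | p, CEvent.both t t', p' =>
      M.delta p.1 t p'.1 ∧ M.delta p.2 t' p'.2 ∧
      ∃ σ : O, M.label t = some σ ∧ M.label t' = some σ
  | p, CEvent.left t, p' => M.delta p.1 t p'.1 ∧ M.label t = none ∧ p.2 = p'.2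
  | p, CEvent.right t, p' => p.1 = p'.1 ∧ M.label t = none ∧ M.delta p.2 t p'.2
  | _, CEvent.eps, _ => False

/-- Transition relation of the ε-extended self-composition `CC^ε_A(S)`:
all transitions of `CC_A(S)` plus, for `x1 ≠ x2`, the added ε-transitions
`((x1,x2),ε,(x1,x1))` and `((x1,x2),ε,(x2,x2))` under the stated conditions. -/
def ccEpsTrans (M : FSA X T O) (p : X × X) (e : CEvent T) (p' : X × X) : Prop :=
  M.ccTrans p e p' ∨
  (e = CEvent.eps ∧ p.1 ≠ p.2 ∧ (p' = (p.1, p.1) ∨ p' = (p.2, p.2)) ∧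
    ∃ (t' : CEvent T) (r : X × X),
      M.ccTrans p' t' r ∧ ∀ t'' : CEvent T, ¬ M.ccTrans p t'' r)

/-- Sequences of transitions of `CC^ε_A(S)`. -/
def CCRun (M : FSA X T O) : X × X → List (CEvent T) → X × X → Prop
  | p, [], p' => p = p'
  | p, e :: s, p' => ∃ r, M.ccEpsTrans p e r ∧ CCRun M r s p'

/-- Reachable states of `CC^ε_A(S)` (from `X0 × X0`). -/
def CCReachable (M : FSA X T O) (p : X × X) : Prop :=
  ∃ p0 : X × X, p0.1 ∈ M.init ∧ p0.2 ∈ M.init ∧ ∃ s : List (CEvent T), M.CCRun p0 s p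

/-- A state is reachable in `S`. -/
def StateReachable (M : FSA X T O) (x : X) : Prop :=
  ∃ x0 ∈ M.init, ∃ s : List T, M.Run x0 s x

/-- Deadlock-freeness. -/
def DeadlockFree (M : FSA X T O) : Prop :=
  ∀ x : X, M.StateReachable x → ∃ (t : T) (x' : X), M.delta x t x'

/-- Divergence-freeness (promptness): no reachable unobservable transition cycle. -/
def DivergenceFree (M : FSA X T O) : Prop :=
  ∀ x : X, M.StateReachable x → ∀ s : List T, s ≠ [] →
    (∀ t ∈ s, M.label t = none) → ¬ M.Run x s x

end FSA

/-!
The estimate `M(S, σσ')` depends only on `M(S, σ)` and `σ'`, so estimates evolve along the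
observer. If `S` is not strongly periodically D-detectable, take `k` larger than the number of
observer states: some run has a prefix after which every estimate met within `k` further
observations meets `T_spec`. If the run makes `k - 1` further observations, two of the `k`
estimates it passes through coincide, which closes a cycle of the observer as in (8). Otherwise
it is eventually unobservable, and a repeated state gives the unobservable cycle of (7).

Conversely, (7) and (8) both give a lasso `a c^ω` in `S` all of whose estimates after `a` meet
`T_spec`. For (8), every state of the first estimate of the cycle is reached, by a run labelled
with the cycle word, from a state of that same estimate; by finiteness some state lies on a cycle
of `S` labelled by a power of the cycle word.
-/

theorem Relation.exists_transGen_self_of_finite {α : Type*} [Finite α] [Nonempty α]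
    {R : α → α → Prop} (h : ∀ a, ∃ b, R b a) : ∃ a, Relation.TransGen R a a := by
  by_contra! hirr
  have : Std.Irrefl (Relation.TransGen R) := ⟨hirr⟩
  obtain ⟨a, -, hmin⟩ := (Finite.wellFounded_of_trans_of_irrefl (Relation.TransGen R)).has_min
    Set.univ ⟨Classical.arbitrary α, trivial⟩
  obtain ⟨b, hb⟩ := h a
  exact hmin b trivial (.single hb)

namespace Stream'

theorem take_cycle_prefix {T : Type*} (c : List T) (hc : c ≠ []) (n : ℕ) :
    (cycle c hc).take n <+: (List.replicate n c).flatten := by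
  have hmul : ∀ m, (cycle c hc).take (m * c.length) = (List.replicate m c).flatten := by
    intro m
    induction m with
    | zero => simp
    | succ m ih =>
      rw [Nat.succ_mul, Nat.add_comm, cycle_eq, ← append_take, ih,
        List.replicate_succ, List.flatten_cons]
  rw [← hmul]
  exact take_prefix_take_left _ _ _ (Nat.le_mul_of_pos_right n (List.length_pos_iff.mpr hc))

theorem take_length_eq_of_prefix_take {T : Type*} {l : List T} {r : Stream' T} {n : ℕ}
    (h : l <+: r.take n) :
    r.take l.length = l := by
  calc r.take l.length = (r.take n).take l.length := by
        rw [take_take, min_eq_right (by simpa using h.length_le)]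
    _ = l := (List.prefix_iff_eq_take.mp h).symm

end Stream'

namespace FSA

variable {X T O : Type}

def MeetsSpec (Tspec : Set (X × X)) (q : Set X) : Prop :=
  (q ×ˢ q) ∩ Tspec ≠ ∅

def HasUnobsCycleMeetingSpec (M : FSA X T O) (Tspec : Set (X × X)) : Prop :=
  ∃ q : Set X, M.ObsReachable q ∧ MeetsSpec Tspec q ∧
    ∃ x ∈ q, ∃ (x' : X) (s1 s2 : List T),
      M.UnobsRun x s1 x' ∧ s2 ≠ [] ∧ M.UnobsRun x' s2 x'

def HasObsCycleMeetingSpec (M : FSA X T O) (Tspec : Set (X × X)) : Prop :=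
  ∃ (n : ℕ), 0 < n ∧ ∃ (q : Fin (n + 1) → Set X) (σ : Fin n → O),
    M.ObsReachable (q 0) ∧ q 0 = q (Fin.last n) ∧
    (∀ i : Fin n, M.obsTrans (q i.castSucc) (σ i) (q i.succ)) ∧ ∀ i, MeetsSpec Tspec (q i)

def InfRun (M : FSA X T O) (g : ℕ → X) (r : Stream' T) : Prop :=
  ∀ i, M.delta (g i) (r.get i) (g (i + 1))

theorem MeetsSpec.nonempty {Tspec : Set (X × X)} {q : Set X} (h : MeetsSpec Tspec q) :
    q.Nonempty := by
  obtain ⟨p, hp, -⟩ := Set.nonempty_iff_ne_empty.mpr h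
  exact ⟨p.1, hp.1⟩

variable {M : FSA X T O}

section Runs

theorem run_append {x x' : X} {s₁ s₂ : List T} :
    M.Run x (s₁ ++ s₂) x' ↔ ∃ y, M.Run x s₁ y ∧ M.Run y s₂ x' := by
  induction s₁ generalizing x with
  | nil => simp [Run]
  | cons t s ih =>
    simp only [List.cons_append, Run, ih]
    aesop

theorem labelSeq_append (a b : List T) : M.labelSeq (a ++ b) = M.labelSeq a ++ M.labelSeq b :=
  List.filterMap_append

theorem labelSeq_eq_nil_iff {s : List T} : M.labelSeq s = [] ↔ ∀ t ∈ s, M.label t = none :=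
  List.filterMap_eq_nil_iff

theorem labelSeq_prefix_of_prefix_replicate {u c : List T} {m : ℕ}
    (h : u <+: (List.replicate m c).flatten) :
    M.labelSeq u <+: (List.replicate m (M.labelSeq c)).flatten := by
  simpa [labelSeq, List.filterMap_flatten] using h.filterMap M.label

end Runs

section Estimates

theorem mem_est_append {σ τ : List O} {x : X} :
    x ∈ M.est (σ ++ τ) ↔ ∃ y ∈ M.est σ, ∃ s, M.labelSeq s = τ ∧ M.Run y s x := by
  constructor
  · rintro ⟨x0, hx0, s, hs, hrun⟩
    obtain ⟨s₁, s₂, rfl, h₁, h₂⟩ := List.filterMap_eq_append_iff.mp hs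
    obtain ⟨y, hy, hy'⟩ := run_append.mp hrun
    exact ⟨y, ⟨x0, hx0, s₁, h₁, hy⟩, s₂, h₂, hy'⟩
  · rintro ⟨y, ⟨x0, hx0, s₁, rfl, hy⟩, s₂, rfl, hy'⟩
    exact ⟨x0, hx0, s₁ ++ s₂, labelSeq_append _ _, run_append.mpr ⟨y, hy, hy'⟩⟩

theorem est_append_congr {σ σ' : List O} (h : M.est σ = M.est σ') (τ : List O) :
    M.est (σ ++ τ) = M.est (σ' ++ τ) := by
  ext x
  simp only [mem_est_append, h]

theorem est_nil : M.est [] = M.obsInit := by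
  ext x
  exact ⟨fun ⟨x0, h0, s, hs, hr⟩ => ⟨x0, h0, s, hr, labelSeq_eq_nil_iff.mp hs⟩,
    fun ⟨x0, h0, s, hr, hs⟩ => ⟨x0, h0, s, labelSeq_eq_nil_iff.mpr hs, hr⟩⟩

theorem est_concat (σ : List O) (o : O) :
    M.est (σ ++ [o]) = M.UR (M.ReachO o (M.est σ)) := by
  ext x
  rw [mem_est_append]
  constructor
  · rintro ⟨y, hy, s, hs, hrun⟩
    obtain ⟨s₁, t, s₂, rfl, h₁, ht, h₂⟩ := List.filterMap_eq_cons_iff.mp hs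
    obtain ⟨z, hz, z', hzz', hrun₂⟩ := run_append.mp hrun
    -- the estimate is closed under unobservable steps
    have hz : z ∈ M.est σ := by
      simpa using mem_est_append.mpr ⟨y, hy, s₁, labelSeq_eq_nil_iff.mpr h₁, hz⟩
    exact ⟨z', ⟨z, hz, t, hzz', ht⟩, s₂, hrun₂, labelSeq_eq_nil_iff.mp h₂⟩
  · rintro ⟨z', ⟨z, hz, t, hzt, ht⟩, s₂, hrun₂, hu₂⟩
    refine ⟨z, hz, t :: s₂, ?_, z', hzt, hrun₂⟩
    simp [labelSeq, ht, List.filterMap_eq_nil_iff.mpr hu₂]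

theorem obsTrans_est {σ : List O} {o : O} (h : (M.est (σ ++ [o])).Nonempty) :
    M.obsTrans (M.est σ) o (M.est (σ ++ [o])) :=
  ⟨est_concat σ o, h⟩

theorem est_eq_of_obsRun {σ w : List O} {q : Set X} (h : M.ObsRun (M.est σ) w q) :
    q = M.est (σ ++ w) := by
  induction w generalizing σ with
  | nil => simpa using h.symm
  | cons o w ih =>
    obtain ⟨q₁, ⟨rfl, -⟩, hrun⟩ := h
    rw [← est_concat] at hrun
    simpa using ih hrun

theorem obsRun_est {σ w : List O} (h : (M.est (σ ++ w)).Nonempty) :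
    M.ObsRun (M.est σ) w (M.est (σ ++ w)) := by
  induction w generalizing σ with
  | nil => simp [ObsRun]
  | cons o w ih =>
    have h' : (M.est ((σ ++ [o]) ++ w)).Nonempty := by simpa using h
    obtain ⟨x, hx⟩ := h'
    obtain ⟨y, hy, -⟩ := mem_est_append.mp hx
    exact ⟨_, obsTrans_est ⟨y, hy⟩, by simpa using ih ⟨x, hx⟩⟩

theorem ObsReachable.exists_eq_est {q : Set X} (h : M.ObsReachable q) : ∃ w, q = M.est w := by
  obtain ⟨w, hw⟩ := h
  rw [← est_nil] at hw
  exact ⟨w, by simpa using est_eq_of_obsRun hw⟩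

theorem obsReachable_est {w : List O} (h : (M.est w).Nonempty) : M.ObsReachable (M.est w) :=
  ⟨w, by simpa [est_nil] using obsRun_est (σ := []) (by simpa using h)⟩

end Estimates

section Lasso

theorem InfRun.run_take {g : ℕ → X} {r : Stream' T} (hg : M.InfRun g r) (n : ℕ) :
    M.Run (g 0) (r.take n) (g n) := by
  induction n with
  | zero => rfl
  | succ n ih => rw [Stream'.take_succ', run_append]; exact ⟨g n, ih, g (n + 1), hg n, rfl⟩

theorem InfRun.drop {g : ℕ → X} {r : Stream' T} (hg : M.InfRun g r) (i : ℕ) :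
    M.InfRun (fun n => g (i + n)) (r.drop i) := fun n => by
  simp only [Stream'.get_drop]
  exact hg (i + n)

theorem exists_infRun_of_invariant (P : X → Stream' T → Prop)
    (hP : ∀ x r, P x r → ∃ y, M.delta x r.head y ∧ P y r.tail) {x : X} {r : Stream' T}
    (h : P x r) : ∃ g, g 0 = x ∧ M.InfRun g r := by
  choose! next hnext using hP
  let g : ℕ → X := fun n => Nat.rec x (fun i xi => next xi (r.drop i)) n
  have hinv : ∀ n, P (g n) (r.drop n) := by
    intro n
    induction n with
    | zero => exact h
    | succ n ih =>
      have := (hnext _ _ ih).2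
      rwa [Stream'.tail_drop, ← Stream'.drop_succ] at this
  refine ⟨g, rfl, fun n => ?_⟩
  simpa [Stream'.head_drop] using (hnext _ _ (hinv n)).1

theorem inLomega_lasso {x0 y : X} {a c : List T} (hx0 : x0 ∈ M.init) (ha : M.Run x0 a y)
    (hc : M.Run y c y) (hne : c ≠ []) : M.InLomega (a ++ₛ Stream'.cycle c hne) := by
  let P : X → Stream' T → Prop := fun x r =>
    ∃ l, M.Run x l y ∧ r = l ++ₛ Stream'.cycle c hne
  have hstep : ∀ x t l, M.Run x (t :: l) y →
      ∃ z, M.delta x ((t :: l) ++ₛ Stream'.cycle c hne).head z ∧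
        P z ((t :: l) ++ₛ Stream'.cycle c hne).tail :=
    fun x t l ⟨z, hz, hrun⟩ => ⟨z, hz, l, hrun, rfl⟩
  have hP : ∀ x r, P x r → ∃ z, M.delta x r.head z ∧ P z r.tail := by
    rintro x r ⟨l, hl, rfl⟩
    cases l with
    | cons t l => exact hstep x t l hl
    | nil =>
      obtain rfl : x = y := hl
      rw [Stream'.nil_append_stream, Stream'.cycle_eq]
      cases c with
      | nil => contradiction
      | cons t c => exact hstep x t c hc
  obtain ⟨g, rfl, hg⟩ := exists_infRun_of_invariant P hP ⟨a, ha, rfl⟩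
  exact ⟨g, hx0, hg⟩

theorem isPrefixOf_iff_take {l : List T} {s : Stream' T} :
    IsPrefixOf l s ↔ s.take l.length = l := by
  refine ⟨fun h => List.ext_getElem (by simp) fun i _ hi => ?_, fun h ⟨i, hi⟩ => ?_⟩
  · rw [Stream'.take_get]
    exact (h ⟨i, hi⟩).symm
  · have := Stream'.take_get i l.length s (by simpa using hi)
    rw [List.getElem_of_eq h] at this
    exact this

theorem not_spdd_of_lasso {Tspec : Set (X × X)} {x0 y : X} {a c : List T} (hx0 : x0 ∈ M.init)
    (ha : M.Run x0 a y) (hc : M.Run y c y) (hne : c ≠ [])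
    (hspec : ∀ m u, u <+: (List.replicate m c).flatten →
      MeetsSpec Tspec (M.est (M.labelSeq (a ++ u)))) :
    ¬ M.SPDD Tspec := by
  rintro ⟨k, -, hk⟩
  obtain ⟨u, -, hu, hempty⟩ := hk _ (inLomega_lasso hx0 ha hc hne) a
    (isPrefixOf_iff_take.mpr (by simp [Stream'.take_append_of_le_length]))
  have hu' : (Stream'.cycle c hne).take u.length = u := by
    have := isPrefixOf_iff_take.mp hu
    rwa [List.length_append, ← Stream'.append_take, List.append_cancel_left_eq] at this
  exact hspec _ u (hu' ▸ Stream'.take_cycle_prefix c hne u.length) hempty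

end Lasso

section Sufficiency

variable {Tspec : Set (X × X)}

theorem not_spdd_of_unobsCycle {w : List O} {x x' : X} {s₁ s₂ : List T}
    (hspec : MeetsSpec Tspec (M.est w)) (hx : x ∈ M.est w) (h₁ : M.UnobsRun x s₁ x')
    (hne : s₂ ≠ []) (h₂ : M.UnobsRun x' s₂ x') : ¬ M.SPDD Tspec := by
  obtain ⟨x0, hx0, a, rfl, ha⟩ := hx
  refine not_spdd_of_lasso hx0 (run_append.mpr ⟨x, ha, h₁.1⟩) h₂.1 hne fun m u hu => ?_
  have hu' : M.labelSeq u = [] := by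
    simpa [labelSeq_eq_nil_iff.mpr h₂.2] using labelSeq_prefix_of_prefix_replicate (M := M) hu
  rwa [labelSeq_append, labelSeq_append, labelSeq_eq_nil_iff.mpr h₁.2, hu', List.append_nil,
    List.append_nil]

theorem est_append_take_ofFn {n : ℕ} {q : Fin (n + 1) → Set X} {σ : Fin n → O} {w : List O}
    (h0 : M.est w = q 0) (htrans : ∀ i : Fin n, M.obsTrans (q i.castSucc) (σ i) (q i.succ)) :
    ∀ l (hl : l ≤ n), M.est (w ++ (List.ofFn σ).take l) = q ⟨l, Nat.lt_succ_of_le hl⟩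
  | 0, _ => by simpa using h0
  | l + 1, hl => by
    rw [← List.take_concat_get' _ l (by simpa using hl), ← List.append_assoc, est_concat,
      est_append_take_ofFn h0 htrans l (by omega), List.getElem_ofFn]
    exact (htrans ⟨l, hl⟩).1.symm

theorem est_append_mem_of_prefix_replicate {Q : Set (Set X)} {w W : List O}
    (hcyc : M.est (w ++ W) = M.est w) (hQ : ∀ v, v <+: W → M.est (w ++ v) ∈ Q) :
    ∀ k v, v <+: (List.replicate k W).flatten → M.est (w ++ v) ∈ Q
  | 0, v, hv => by
    obtain rfl := List.prefix_nil.mp (by simpa using hv)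
    exact hQ [] (List.nil_prefix)
  | k + 1, v, hv => by
    rw [List.replicate_succ, List.flatten_cons] at hv
    by_cases hlen : v.length ≤ W.length
    · exact hQ v (List.prefix_of_prefix_length_le hv (List.prefix_append _ _) hlen)
    · obtain ⟨t, rfl⟩ := List.prefix_of_prefix_length_le (List.prefix_append _ _) hv (by omega)
      rw [← List.append_assoc, est_append_congr hcyc]
      exact est_append_mem_of_prefix_replicate hcyc hQ k t ((List.prefix_append_right_inj W).mp hv)

theorem exists_run_of_transGen {W : List O} {y z : X}
    (h : Relation.TransGen (fun y z => ∃ s, M.labelSeq s = W ∧ M.Run y s z) y z) :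
    ∃ c k, M.labelSeq c = (List.replicate (k + 1) W).flatten ∧ M.Run y c z := by
  induction h with
  | single h =>
    obtain ⟨s, hs, hrun⟩ := h
    exact ⟨s, 0, by simpa using hs, hrun⟩
  | tail _ h ih =>
    obtain ⟨c, k, hc, hrun⟩ := ih
    obtain ⟨s, hs, hrun'⟩ := h
    refine ⟨c ++ s, k + 1, ?_, run_append.mpr ⟨_, hrun, hrun'⟩⟩
    rw [labelSeq_append, hc, hs, List.replicate_succ' (n := k + 1), List.flatten_append]
    simp

/-- Every state of `M(S, w W) = M(S, w)` is reached from a state of `M(S, w)` by a run labelled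
`W`; by finiteness, following these runs backwards must close a cycle. -/
theorem exists_run_cycle_of_est_append_eq [Finite X] {w W : List O}
    (hcyc : M.est (w ++ W) = M.est w) (hne : (M.est w).Nonempty) :
    ∃ z ∈ M.est w, ∃ c k,
      M.labelSeq c = (List.replicate (k + 1) W).flatten ∧ M.Run z c z := by
  have : Nonempty (M.est w) := hne.to_subtype
  obtain ⟨⟨z, hz⟩, hzz⟩ := Relation.exists_transGen_self_of_finite
    (R := fun y z : M.est w => ∃ s, M.labelSeq s = W ∧ M.Run y s z) fun ⟨z, hz⟩ => by
      rw [← hcyc] at hz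
      obtain ⟨y, hy, s, hs, hrun⟩ := mem_est_append.mp hz
      exact ⟨⟨y, hy⟩, s, hs, hrun⟩
  exact ⟨z, hz, exists_run_of_transGen
    (Relation.TransGen.lift Subtype.val (p := fun y z => ∃ s, M.labelSeq s = W ∧ M.Run y s z)
      (fun _ _ h => h) _ _ hzz)⟩

theorem not_spdd_of_obsCycle [Finite X] {n : ℕ} (hn : 0 < n) {q : Fin (n + 1) → Set X}
    {σ : Fin n → O} {w : List O} (h0 : M.est w = q 0) (hlast : q 0 = q (Fin.last n))
    (htrans : ∀ i : Fin n, M.obsTrans (q i.castSucc) (σ i) (q i.succ))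
    (hspec : ∀ i, MeetsSpec Tspec (q i)) : ¬ M.SPDD Tspec := by
  set W := List.ofFn σ
  have hW : W ≠ [] := by simpa [W] using hn.ne'
  have hcyc : M.est (w ++ W) = M.est w := by
    have := est_append_take_ofFn h0 htrans n le_rfl
    rw [List.take_of_length_le (by simp)] at this
    rw [this, h0, hlast]
    rfl
  have hQ : ∀ k v, v <+: (List.replicate k W).flatten → M.est (w ++ v) ∈ Set.range q :=
    est_append_mem_of_prefix_replicate hcyc fun v hv => by
      rw [List.prefix_iff_eq_take.mp hv]
      exact ⟨_, (est_append_take_ofFn h0 htrans _ (by simpa [W] using hv.length_le)).symm⟩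
  obtain ⟨z, ⟨x0, hx0, a, rfl, ha⟩, c, k, hc, hrun⟩ :=
    exists_run_cycle_of_est_append_eq hcyc (h0 ▸ (hspec 0).nonempty)
  have hcne : c ≠ [] := by
    rintro rfl
    simp [labelSeq, List.replicate_succ, hW] at hc
  refine not_spdd_of_lasso hx0 ha hrun hcne fun m u hu => ?_
  have hu' := labelSeq_prefix_of_prefix_replicate (M := M) hu
  have hpow : (List.replicate m (List.replicate (k + 1) W).flatten).flatten =
      (List.replicate (m * (k + 1)) W).flatten := by
    rw [← List.flatten_replicate_replicate, List.flatten_flatten, List.map_replicate]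
  rw [hc, hpow] at hu'
  obtain ⟨i, hi⟩ := hQ _ _ hu'
  rw [labelSeq_append, ← hi]
  exact hspec i

end Sufficiency

section Necessity

variable {Tspec : Set (X × X)}

theorem exists_run_of_not_spdd (h : ¬ M.SPDD Tspec) {k : ℕ} (hk : 0 < k) :
    ∃ x0 ∈ M.init, ∃ (a : List T) (g : ℕ → X) (r : Stream' T),
      M.Run x0 a (g 0) ∧ M.InfRun g r ∧ ∀ n, (M.labelSeq (r.take n)).length < k →
        MeetsSpec Tspec (M.est (M.labelSeq (a ++ r.take n))) := by
  unfold SPDD at h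
  push Not at h
  obtain ⟨(s : Stream' T), ⟨g, hg0, hg⟩, a, ha, hspec⟩ := h k hk
  have hg : M.InfRun g s := hg
  have ha : Stream'.take a.length s = a := isPrefixOf_iff_take.mp ha
  refine ⟨g 0, hg0, a, fun n => g (a.length + n), Stream'.drop a.length s, ?_, hg.drop _,
    fun n hn => Set.nonempty_iff_ne_empty.mp (hspec _ hn ?_)⟩
  · have := hg.run_take a.length
    rw [ha] at this
    simpa using this
  · rw [isPrefixOf_iff_take, List.length_append, Stream'.take_add, ha, Stream'.length_take]

theorem exists_labelSeq_take_eq_of_prefix {v : List O} {r : Stream' T} {n : ℕ}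
    (h : v <+: M.labelSeq (r.take n)) : ∃ n', M.labelSeq (r.take n') = v := by
  obtain ⟨t, ht⟩ := h
  obtain ⟨l₁, l₂, hl, h₁, -⟩ := List.filterMap_eq_append_iff.mp ht.symm
  refine ⟨l₁.length, ?_⟩
  rw [Stream'.take_length_eq_of_prefix_take ⟨l₂, hl.symm⟩]
  exact h₁

theorem labelSeq_take_prefix {r : Stream' T} {m n : ℕ} (h : m ≤ n) :
    M.labelSeq (r.take m) <+: M.labelSeq (r.take n) :=
  (Stream'.take_prefix_take_left m n r h).filterMap M.label

theorem hasObsCycle_of_est_take_eq {ρ v : List O} {i j : ℕ} (hij : i < j) (hj : j ≤ v.length)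
    (heq : M.est (ρ ++ v.take i) = M.est (ρ ++ v.take j))
    (hspec : ∀ l ≤ j, MeetsSpec Tspec (M.est (ρ ++ v.take l))) :
    M.HasObsCycleMeetingSpec Tspec := by
  refine ⟨j - i, by omega, fun l => M.est (ρ ++ v.take (i + l)), fun l => v[i + l]'(by omega),
    ?_, ?_, fun l => ?_, fun l => hspec _ (by omega)⟩
  · exact obsReachable_est (hspec _ (by omega)).nonempty
  · simpa [Nat.add_sub_cancel' hij.le] using heq
  · have hl : i + l < v.length := by omega
    have := obsTrans_est (M := M) (σ := ρ ++ v.take (i + l)) (o := v[i + l])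
    rw [List.append_assoc, List.take_concat_get' _ _ hl] at this
    exact this (hspec _ (by omega)).nonempty

theorem hasObsCycle_of_long_observation [Finite X] {a : List T} {r : Stream' T} {n : ℕ}
    (hspec : ∀ n, (M.labelSeq (r.take n)).length < Nat.card (Set X) + 1 →
      MeetsSpec Tspec (M.est (M.labelSeq (a ++ r.take n))))
    (hlong : Nat.card (Set X) ≤ (M.labelSeq (r.take n)).length) :
    M.HasObsCycleMeetingSpec Tspec := by
  set v := M.labelSeq (r.take n)
  have hspec' : ∀ l ≤ Nat.card (Set X), MeetsSpec Tspec (M.est (M.labelSeq a ++ v.take l)) := by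
    intro l hl
    obtain ⟨n', hn'⟩ := exists_labelSeq_take_eq_of_prefix (List.take_prefix l v)
    have := hspec n' (by rw [hn', List.length_take]; omega)
    rwa [labelSeq_append, hn'] at this
  obtain ⟨l₁, l₂, heq, hne⟩ := Function.not_injective_iff.mp fun hinj => by
    simpa using Nat.card_le_card_of_injective
      (fun l : Fin (Nat.card (Set X) + 1) => M.est (M.labelSeq a ++ v.take l)) hinj
  rcases hne.lt_or_gt with h | h
  · exact hasObsCycle_of_est_take_eq h (by omega) heq fun l hl => hspec' l (by omega)
  · exact hasObsCycle_of_est_take_eq h (by omega) heq.symm fun l hl => hspec' l (by omega)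

theorem hasUnobsCycle_of_bounded_observation [Finite X] {x0 : X} {a : List T} {g : ℕ → X}
    {r : Stream' T} (hx0 : x0 ∈ M.init) (ha : M.Run x0 a (g 0)) (hg : M.InfRun g r)
    (hspec : ∀ n, MeetsSpec Tspec (M.est (M.labelSeq (a ++ r.take n))))
    (hbdd : BddAbove (Set.range fun n => (M.labelSeq (r.take n)).length)) :
    M.HasUnobsCycleMeetingSpec Tspec := by
  obtain ⟨N, hN⟩ :
      ∃ N, ∀ n, (M.labelSeq (r.take n)).length ≤ (M.labelSeq (r.take N)).length := by
    obtain ⟨N, hN⟩ := Nat.sSup_mem (Set.range_nonempty _) hbdd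
    refine ⟨N, fun n => ?_⟩
    simp only at hN
    rw [hN]
    exact le_csSup hbdd ⟨n, rfl⟩
  have hstable : ∀ n, N ≤ n → M.labelSeq (r.take n) = M.labelSeq (r.take N) := fun n hn =>
    ((labelSeq_take_prefix hn).eq_of_length (le_antisymm (labelSeq_take_prefix hn).length_le
      (hN n))).symm
  obtain ⟨t₁, t₂, hne, heq⟩ := Finite.exists_ne_map_eq_of_infinite fun t => g (N + t)
  wlog hlt : t₁ < t₂ generalizing t₁ t₂
  · exact this t₂ t₁ hne.symm heq.symm (by omega)
  set i := N + t₁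
  set d := t₂ - t₁
  have hseg : M.Run (g i) ((r.drop i).take d) (g i) := by
    have := (hg.drop i).run_take d
    simp only [Nat.add_zero] at this
    rwa [show i + d = N + t₂ by omega, ← heq] at this
  have hunobs : M.labelSeq ((r.drop i).take d) = [] := by
    have := hstable (i + d) (by omega)
    rwa [Stream'.take_add, labelSeq_append, ← hstable i (by omega), List.append_right_eq_self]
      at this
  have hx : g i ∈ M.est (M.labelSeq (a ++ r.take i)) :=
    ⟨x0, hx0, _, rfl, run_append.mpr ⟨g 0, ha, hg.run_take i⟩⟩
  refine ⟨_, obsReachable_est ⟨_, hx⟩, hspec i, g i, hx, g i, [], _, ⟨rfl, by simp⟩, ?_,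
    hseg, labelSeq_eq_nil_iff.mp hunobs⟩
  intro h
  have := congrArg List.length h
  simp only [Stream'.length_take, List.length_nil] at this
  omega

theorem hasCycle_of_not_spdd [Finite X] (h : ¬ M.SPDD Tspec) :
    M.HasUnobsCycleMeetingSpec Tspec ∨ M.HasObsCycleMeetingSpec Tspec := by
  obtain ⟨x0, hx0, a, g, r, ha, hg, hspec⟩ :=
    exists_run_of_not_spdd h (Nat.succ_pos (Nat.card (Set X)))
  by_cases hlong : ∃ n, Nat.card (Set X) ≤ (M.labelSeq (r.take n)).length
  · obtain ⟨n, hn⟩ := hlong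
    exact .inr (hasObsCycle_of_long_observation hspec hn)
  · push Not at hlong
    exact .inl (hasUnobsCycle_of_bounded_observation hx0 ha hg
      (fun n => hspec n ((hlong n).trans (Nat.lt_succ_self _)))
      ⟨_, Set.forall_mem_range.mpr fun n => (hlong n).le⟩)

end Necessity

theorem not_spdd_of_hasCycle [Finite X] {Tspec : Set (X × X)}
    (h : M.HasUnobsCycleMeetingSpec Tspec ∨ M.HasObsCycleMeetingSpec Tspec) :
    ¬ M.SPDD Tspec := by
  rcases h with ⟨q, hq, hspec, x, hx, x', s₁, s₂, h₁, hne, h₂⟩ |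
    ⟨n, hn, q, σ, hq, hlast, htrans, hspec⟩
  · obtain ⟨w, rfl⟩ := hq.exists_eq_est
    exact not_spdd_of_unobsCycle hspec hx h₁ hne h₂
  · obtain ⟨w, hw⟩ := hq.exists_eq_est
    exact not_spdd_of_obsCycle hn hw.symm hlast htrans hspec

end FSA

theorem not_spdd_iff_observer_general {X T O : Type} [Fintype X]
    (M : FSA X T O) (Tspec : Set (X × X)) :
    ¬ M.SPDD Tspec ↔
      ((∃ q : Set X, M.ObsReachable q ∧ (q ×ˢ q) ∩ Tspec ≠ ∅ ∧
          ∃ x ∈ q, ∃ (x' : X) (s1 s2 : List T),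
            M.UnobsRun x s1 x' ∧ s2 ≠ [] ∧ M.UnobsRun x' s2 x') ∨
       (∃ (n : ℕ), 0 < n ∧ ∃ (q : Fin (n + 1) → Set X) (σ : Fin n → O),
          M.ObsReachable (q 0) ∧ q 0 = q (Fin.last n) ∧
          (∀ i : Fin n, M.obsTrans (q i.castSucc) (σ i) (q i.succ)) ∧
          ∀ i : Fin (n + 1), (q i ×ˢ q i) ∩ Tspec ≠ ∅)) :=
  ⟨FSA.hasCycle_of_not_spdd, FSA.not_spdd_of_hasCycle⟩

/-- `S` is not strongly periodically D-detectable w.r.t. `Tspec` iff in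
its observer `S_obs`: (7) there are a reachable state `q` and `x ∈ q` with
`(q × q) ∩ Tspec ≠ ∅` and a transition sequence `x →^{s1} x' →^{s2} x'` in `S` with
`s1 ∈ (T_uo)*`, `s2 ∈ (T_uo)^+`; or (8) there is a reachable transition cycle of
`S_obs` every state `q` of which satisfies `(q × q) ∩ Tspec ≠ ∅`. -/
theorem not_spdd_iff_observer {X T O : Type} [Fintype X] [Fintype T] [Fintype O]
    (M : FSA X T O) (Tspec : Set (X × X)) :
    ¬ M.SPDD Tspec ↔
      ((∃ q : Set X, M.ObsReachable q ∧ (q ×ˢ q) ∩ Tspec ≠ ∅ ∧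
          ∃ x ∈ q, ∃ (x' : X) (s1 s2 : List T),
            M.UnobsRun x s1 x' ∧ s2 ≠ [] ∧ M.UnobsRun x' s2 x') ∨
       (∃ (n : ℕ), 0 < n ∧ ∃ (q : Fin (n + 1) → Set X) (σ : Fin n → O),
          M.ObsReachable (q 0) ∧ q 0 = q (Fin.last n) ∧
          (∀ i : Fin n, M.obsTrans (q i.castSucc) (σ i) (q i.succ)) ∧
          ∀ i : Fin (n + 1), (q i ×ˢ q i) ∩ Tspec ≠ ∅)) :=
  not_spdd_iff_observer_general M Tspec
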